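/- (Theorem 5.4) Let X and Y be compact metric spaces, K a finite simplicial complex in ℝⁿ that is pure n-dimensional (every face of K is contained in a face consisting of n+1 points forming an affine basis of ℝⁿ), L a finite simplicial complex in ℝᵐ, and τ_K : X ≃ₜ K.space and τ_L : Y ≃ₜ L.space homeomorphisms. Let g : X → Y be continuous and ε > 0. Then there exist k ≥ 1, affine bases σ_1, …, σ_k of ℝⁿ whose convex hulls cover K.space, and affine maps A_1, …, A_k : ℝⁿ → ℝᵐ such that the two-hidden-layer feed-forward network N of the paper's architecture determined by the σ_i and A_i maps K.space into L.space and satisfies dist(g(x), τ_L.symm (N (τ_K x))) ≤ ε for every x ∈ X. -/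

import Mathlib

open scoped BigOperators
open Geometry

/-- The indicator ψ of an affine basis σ: 1 if all barycentric coordinates of x with
respect to σ are ≥ 0, 0 otherwise. -/
noncomputable def simplexIndicator {n : ℕ}
    (σ : AffineBasis (Fin (n + 1)) ℝ (Fin n → ℝ)) (x : Fin n → ℝ) : ℝ :=
  if ∀ i, 0 ≤ σ.coord i x then 1 else 0

/-- The two-hidden-layer feed-forward network of the paper's architecture determined by
affine bases σ_1, …, σ_k of ℝⁿ and affine maps A_1, …, A_k : ℝⁿ → ℝᵐ. -/
noncomputable def paperNetwork {n m k : ℕ}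
    (σ : Fin k → AffineBasis (Fin (n + 1)) ℝ (Fin n → ℝ))
    (A : Fin k → ((Fin n → ℝ) →ᵃ[ℝ] (Fin m → ℝ))) (x : Fin n → ℝ) : Fin m → ℝ :=
  (∑ i, simplexIndicator (σ i) x)⁻¹ • ∑ i, simplexIndicator (σ i) x • A i (x)

/-- K is pure n-dimensional: every face is contained in a face consisting of n+1 points
which form an affine basis of ℝⁿ. -/
def IsPureComplex {n : ℕ} (K : SimplicialComplex ℝ (Fin n → ℝ)) : Prop :=
  ∀ σ ∈ K.faces, ∃ τ ∈ K.faces, σ ⊆ τ ∧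
    ∃ b : AffineBasis (Fin (n + 1)) ℝ (Fin n → ℝ), Set.range ⇑b = (τ : Set (Fin n → ℝ))

/-!
Cover `K.space` by small `n`-simplices `σ_p` around its points `p` and give the simplex `σ_p` the
constant affine map `F p`, where `F = τL ∘ g ∘ τK⁻¹`; the network then outputs at `x` the average
of the values `F p` over the simplices containing `x`. Since `L` has finitely many closed faces,
a point near `F p` lies only in faces whose hulls contain `F p`; so if every simplex is small
enough, all values averaged at `x` lie in one face of `L` through `F x` and close to `F x`, and by
convexity so does their average. Uniform continuity of `τL⁻¹` on the compact `L.space` turns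
closeness in `ℝᵐ` into closeness in `Y`.
-/

open Set Filter Topology Metric

theorem eventually_nhds_forall_mem_imp_mem {X ι : Type*} [TopologicalSpace X] {s : Set ι}
    (hs : s.Finite) {C : ι → Set X} (hC : ∀ i ∈ s, IsClosed (C i)) (y : X) :
    ∀ᶠ z in 𝓝 y, ∀ i ∈ s, z ∈ C i → y ∈ C i := by
  refine (eventually_all_finite hs).2 fun i hi => ?_
  by_cases hy : y ∈ C i
  · exact .of_forall fun _ _ => hy
  · filter_upwards [(hC i hi).isOpen_compl.mem_nhds hy] with z hz hzC using absurd hzC hz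

namespace Geometry.SimplicialComplex

variable {E : Type*} [AddCommGroup E] [Module ℝ E] [TopologicalSpace E] [IsTopologicalAddGroup E]
  [ContinuousSMul ℝ E] {K : SimplicialComplex ℝ E}

theorem isCompact_space (hK : K.faces.Finite) : IsCompact K.space :=
  hK.isCompact_biUnion fun s _ => s.finite_toSet.isCompact_convexHull ℝ

theorem eventually_nhds_mem_convexHull_imp [T2Space E] (hK : K.faces.Finite) (y : E) :
    ∀ᶠ z in 𝓝 y, ∀ s ∈ K.faces, z ∈ convexHull ℝ (s : Set E) → y ∈ convexHull ℝ (s : Set E) :=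
  eventually_nhds_forall_mem_imp_mem hK
    (fun s _ => (s.finite_toSet.isCompact_convexHull ℝ).isClosed) y

end Geometry.SimplicialComplex

namespace AffineBasis

variable {ι k V P V₂ P₂ : Type*} [Ring k] [AddCommGroup V] [Module k V] [AddTorsor V P]
  [AddCommGroup V₂] [Module k V₂] [AddTorsor V₂ P₂]

def map (b : AffineBasis ι k P) (f : P ≃ᵃ[k] P₂) : AffineBasis ι k P₂ :=
  ⟨f ∘ b, b.ind.map' f.toAffineMap f.injective, by
    rw [range_comp, ← f.span_eq_top_iff]
    exact b.tot⟩

theorem coe_map (b : AffineBasis ι k P) (f : P ≃ᵃ[k] P₂) : ⇑(b.map f) = f ∘ b := rfl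

theorem convexHull_range_map {E F : Type*} [PartialOrder k] [AddCommGroup E] [Module k E]
    [AddCommGroup F] [Module k F] (b : AffineBasis ι k E) (f : E ≃ᵃ[k] F) :
    convexHull k (range (b.map f)) = f '' convexHull k (range b) := by
  rw [coe_map, range_comp]
  exact (f.toAffineMap.image_convexHull _).symm

end AffineBasis

theorem exists_affineBasis_convexHull_mem_nhds_subset {ι E : Type*} [Fintype ι]
    [NormedAddCommGroup E] [NormedSpace ℝ E] [FiniteDimensional ℝ E]
    (hι : Fintype.card ι = Module.finrank ℝ E + 1) {p : E} {U : Set E} (hU : U ∈ 𝓝 p) :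
    ∃ b : AffineBasis ι ℝ E, convexHull ℝ (range b) ∈ 𝓝 p ∧ convexHull ℝ (range b) ⊆ U := by
  obtain ⟨δ, hδ, hδU⟩ := Metric.mem_nhds_iff.1 hU
  obtain ⟨b₀⟩ := AffineBasis.exists_affineBasis_of_finiteDimensional (P := E) hι
  set c := Finset.univ.centroid ℝ b₀
  obtain ⟨R, hR, hR_ball⟩ :=
    ((finite_range b₀).isCompact_convexHull ℝ).isBounded.subset_ball_lt 0 c
  set f : E ≃ᵃ[ℝ] E :=
    (AffineEquiv.homothetyUnitsMulHom c (Units.mk0 (δ / R) (by positivity))).trans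
      (AffineEquiv.constVAdd ℝ E (p -ᵥ c))
  have hfc : f c = p := by simp [f]
  have hf_dist : ∀ y, dist (f y) p = δ / R * dist y c := by
    intro y
    rw [← hfc]
    simp only [f, AffineEquiv.trans_apply, AffineEquiv.constVAdd_apply, dist_vadd_cancel_left,
      AffineEquiv.coe_homothetyUnitsMulHom_apply, Units.val_mk0, AffineMap.homothety_apply_same,
      dist_homothety_center, Real.norm_of_nonneg (by positivity : 0 ≤ δ / R), dist_comm c]
  refine ⟨b₀.map f, ?_, ?_⟩
  · rw [AffineBasis.convexHull_range_map, ← hfc]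
    exact f.toContinuousAffineEquiv.toHomeomorph.isOpenMap.image_mem_nhds
      (mem_interior_iff_mem_nhds.1 b₀.centroid_mem_interior_convexHull)
  · rw [AffineBasis.convexHull_range_map]
    rintro _ ⟨y, hy, rfl⟩
    refine hδU ?_
    rw [mem_ball, hf_dist]
    calc δ / R * dist y c < δ / R * R := by gcongr; exact hR_ball hy
      _ = δ := div_mul_cancel₀ δ hR.ne'

section PaperNetwork

variable {n m k : ℕ}

theorem simplexIndicator_nonneg (σ : AffineBasis (Fin (n + 1)) ℝ (Fin n → ℝ)) (x : Fin n → ℝ) :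
    0 ≤ simplexIndicator σ x := by
  unfold simplexIndicator
  split_ifs <;> norm_num

theorem simplexIndicator_ne_zero_iff (σ : AffineBasis (Fin (n + 1)) ℝ (Fin n → ℝ))
    (x : Fin n → ℝ) : simplexIndicator σ x ≠ 0 ↔ x ∈ convexHull ℝ (range σ) := by
  rw [σ.convexHull_eq_nonneg_coord]
  simp [simplexIndicator]

theorem paperNetwork_eq_centerMass (σ : Fin k → AffineBasis (Fin (n + 1)) ℝ (Fin n → ℝ))
    (A : Fin k → (Fin n → ℝ) →ᵃ[ℝ] (Fin m → ℝ)) (x : Fin n → ℝ) :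
    paperNetwork σ A x =
      Finset.univ.centerMass (fun i => simplexIndicator (σ i) x) (fun i => A i x) :=
  rfl

theorem paperNetwork_mem_of_convex {σ : Fin k → AffineBasis (Fin (n + 1)) ℝ (Fin n → ℝ)}
    {A : Fin k → (Fin n → ℝ) →ᵃ[ℝ] (Fin m → ℝ)} {x : Fin n → ℝ} {C : Set (Fin m → ℝ)}
    (hC : Convex ℝ C) (hx : ∃ i, x ∈ convexHull ℝ (range (σ i)))
    (hA : ∀ i, x ∈ convexHull ℝ (range (σ i)) → A i x ∈ C) :
    paperNetwork σ A x ∈ C := by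
  classical
  rw [paperNetwork_eq_centerMass, ← Finset.centerMass_filter_ne_zero]
  obtain ⟨i, hi⟩ := hx
  refine hC.centerMass_mem (fun j _ => simplexIndicator_nonneg _ _) ?_
    fun j hj => hA j ((simplexIndicator_ne_zero_iff _ _).1 (Finset.mem_filter.1 hj).2)
  refine Finset.sum_pos' (fun j _ => simplexIndicator_nonneg _ _) ⟨i, ?_, ?_⟩
  · simpa using (simplexIndicator_ne_zero_iff _ _).2 hi
  · exact (simplexIndicator_nonneg _ _).lt_of_ne' ((simplexIndicator_ne_zero_iff _ _).2 hi)

end PaperNetwork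

theorem exists_affineBasis_nhds_forall_faces_dist_lt {n m : ℕ} {S : Set (Fin n → ℝ)}
    {L : SimplicialComplex ℝ (Fin m → ℝ)} (hL : L.faces.Finite) {F : S → L.space}
    (hF : Continuous F) {η : ℝ} (hη : 0 < η) (p : S) :
    ∃ b : AffineBasis (Fin (n + 1)) ℝ (Fin n → ℝ),
      convexHull ℝ (range b) ∈ 𝓝 (p : Fin n → ℝ) ∧
      ∀ x (hx : x ∈ S), x ∈ convexHull ℝ (range b) →
        (∀ s ∈ L.faces, (F ⟨x, hx⟩ : Fin m → ℝ) ∈ convexHull ℝ (s : Set (Fin m → ℝ)) →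
          (F p : Fin m → ℝ) ∈ convexHull ℝ (s : Set (Fin m → ℝ))) ∧
        dist (F ⟨x, hx⟩ : Fin m → ℝ) (F p) < η := by
  have hnear : ∀ᶠ x in 𝓝 p, (∀ s ∈ L.faces,
      (F x : Fin m → ℝ) ∈ convexHull ℝ (s : Set (Fin m → ℝ)) →
        (F p : Fin m → ℝ) ∈ convexHull ℝ (s : Set (Fin m → ℝ))) ∧
      dist (F x : Fin m → ℝ) (F p) < η :=
    (continuous_subtype_val.comp hF).continuousAt.eventually
      ((L.eventually_nhds_mem_convexHull_imp hL _).and (ball_mem_nhds _ hη))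
  obtain ⟨U, hU, hUF⟩ := (mem_nhds_subtype _ _ _).1 hnear
  obtain ⟨b, hb, hbU⟩ :=
    exists_affineBasis_convexHull_mem_nhds_subset (ι := Fin (n + 1)) (by simp) hU
  exact ⟨b, hb, fun x hx hxb => hUF (hbU hxb)⟩

theorem exists_paperNetwork_mem_space_dist_le {n m : ℕ} {K : SimplicialComplex ℝ (Fin n → ℝ)}
    (hK : K.faces.Finite) {L : SimplicialComplex ℝ (Fin m → ℝ)} (hL : L.faces.Finite)
    {F : K.space → L.space} (hF : Continuous F) {η : ℝ} (hη : 0 < η) :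
    ∃ (k : ℕ) (_ : 1 ≤ k) (σ : Fin k → AffineBasis (Fin (n + 1)) ℝ (Fin n → ℝ))
      (A : Fin k → ((Fin n → ℝ) →ᵃ[ℝ] (Fin m → ℝ))),
      K.space ⊆ ⋃ i, convexHull ℝ (range (σ i)) ∧
      ∀ x (hx : x ∈ K.space),
        paperNetwork σ A x ∈ L.space ∧ dist (paperNetwork σ A x) (F ⟨x, hx⟩) ≤ η := by
  rcases K.space.eq_empty_or_nonempty with hKe | ⟨x₀, hx₀⟩
  · obtain ⟨b⟩ := AffineBasis.exists_affineBasis_of_finiteDimensional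
      (ι := Fin (n + 1)) (k := ℝ) (P := Fin n → ℝ) (by simp)
    exact ⟨1, le_rfl, fun _ => b, fun _ => 0, by simp [hKe], by simp [hKe]⟩
  choose B hB_nhds hB using exists_affineBasis_nhds_forall_faces_dist_lt hL hF hη
  obtain ⟨t, ht⟩ := (SimplicialComplex.isCompact_space hK).elim_nhds_subcover'
    (fun x hx => convexHull ℝ (range (B ⟨x, hx⟩))) fun x hx => hB_nhds ⟨x, hx⟩
  set e := t.equivFin.symm
  have hcover : ∀ x ∈ K.space, ∃ i, x ∈ convexHull ℝ (range (B (e i))) := by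
    intro x hx
    obtain ⟨p, hp, hxp⟩ := mem_iUnion₂.1 (ht hx)
    exact ⟨t.equivFin ⟨p, hp⟩, by simpa [e] using hxp⟩
  let σ : Fin t.card → AffineBasis (Fin (n + 1)) ℝ (Fin n → ℝ) := fun i => B (e i)
  let A : Fin t.card → (Fin n → ℝ) →ᵃ[ℝ] (Fin m → ℝ) :=
    fun i => AffineMap.const ℝ _ (F (e i) : Fin m → ℝ)
  refine ⟨t.card, (hcover x₀ hx₀).choose.pos, σ, A, fun x hx => mem_iUnion.2 (hcover x hx),
    fun x hx => ?_⟩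
  obtain ⟨s, hs, hFs⟩ := SimplicialComplex.mem_space_iff.1 (F ⟨x, hx⟩).2
  have hN : paperNetwork σ A x ∈
      convexHull ℝ (s : Set (Fin m → ℝ)) ∩ closedBall (F ⟨x, hx⟩ : Fin m → ℝ) η := by
    refine paperNetwork_mem_of_convex ((convex_convexHull ℝ _).inter (convex_closedBall _ _))
      (hcover x hx) fun i hi => ?_
    obtain ⟨hfaces, hdist⟩ := hB (e i) x hx hi
    exact ⟨hfaces s hs hFs, by rw [mem_closedBall, dist_comm]; exact hdist.le⟩
  exact ⟨L.convexHull_subset_space hs hN.1, hN.2⟩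

theorem universal_approximation_triangulable_general (n m : ℕ)
    (X : Type*) [MetricSpace X]
    (Y : Type*) [MetricSpace Y]
    (K : SimplicialComplex ℝ (Fin n → ℝ)) (hKfin : K.faces.Finite)
    (L : SimplicialComplex ℝ (Fin m → ℝ)) (hLfin : L.faces.Finite)
    (τK : X ≃ₜ K.space) (τL : Y ≃ₜ L.space)
    (g : X → Y) (hg : Continuous g) (ε : ℝ) (hε : 0 < ε) :
    ∃ (k : ℕ) (_ : 1 ≤ k) (σ : Fin k → AffineBasis (Fin (n + 1)) ℝ (Fin n → ℝ))
      (A : Fin k → ((Fin n → ℝ) →ᵃ[ℝ] (Fin m → ℝ))),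
      K.space ⊆ (⋃ i, convexHull ℝ (Set.range ⇑(σ i))) ∧
      (∀ x ∈ K.space, paperNetwork σ A x ∈ L.space) ∧
      ∃ h : ∀ x : X, paperNetwork σ A (τK x : Fin n → ℝ) ∈ L.space,
        ∀ x : X, dist (g x) (τL.symm ⟨paperNetwork σ A (τK x : Fin n → ℝ), h x⟩) ≤ ε := by
  have : CompactSpace L.space :=
    isCompact_iff_compactSpace.1 (SimplicialComplex.isCompact_space hLfin)
  obtain ⟨η, hη, hτL⟩ := Metric.uniformContinuous_iff.1
    (CompactSpace.uniformContinuous_of_continuous τL.symm.continuous) ε hε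
  obtain ⟨k, hk, σ, A, hcover, hN⟩ := exists_paperNetwork_mem_space_dist_le hKfin hLfin
    (F := τL ∘ g ∘ τK.symm) (by fun_prop) (half_pos hη)
  refine ⟨k, hk, σ, A, hcover, fun x hx => (hN x hx).1, fun x => (hN _ (τK x).2).1, fun x => ?_⟩
  have hclose : dist (⟨paperNetwork σ A (τK x), (hN _ (τK x).2).1⟩ : L.space) (τL (g x)) < η := by
    rw [Subtype.dist_eq]
    simpa using (hN _ (τK x).2).2.trans_lt (half_lt_self hη)
  simpa [dist_comm] using (hτL hclose).le

/-- Theorem 5.4: a continuous map g between compact metric spaces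
triangulated by a finite pure complex K in ℝⁿ and a finite complex L in ℝᵐ can be
ε-approximated by (the pullback of) a two-hidden-layer feed-forward network of the
paper's architecture mapping K.space into L.space. -/
theorem universal_approximation_triangulable (n m : ℕ)
    (X : Type*) [MetricSpace X] [CompactSpace X]
    (Y : Type*) [MetricSpace Y] [CompactSpace Y]
    (K : SimplicialComplex ℝ (Fin n → ℝ)) (hKfin : K.faces.Finite)
    (hKpure : IsPureComplex K)
    (L : SimplicialComplex ℝ (Fin m → ℝ)) (hLfin : L.faces.Finite)
    (τK : X ≃ₜ K.space) (τL : Y ≃ₜ L.space)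
    (g : X → Y) (hg : Continuous g) (ε : ℝ) (hε : 0 < ε) :
    ∃ (k : ℕ) (_ : 1 ≤ k) (σ : Fin k → AffineBasis (Fin (n + 1)) ℝ (Fin n → ℝ))
      (A : Fin k → ((Fin n → ℝ) →ᵃ[ℝ] (Fin m → ℝ))),
      K.space ⊆ (⋃ i, convexHull ℝ (Set.range ⇑(σ i))) ∧
      (∀ x ∈ K.space, paperNetwork σ A x ∈ L.space) ∧
      ∃ h : ∀ x : X, paperNetwork σ A (τK x : Fin n → ℝ) ∈ L.space,
        ∀ x : X, dist (g x) (τL.symm ⟨paperNetwork σ A (τK x : Fin n → ℝ), h x⟩) ≤ ε :=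
  universal_approximation_triangulable_general n m X Y K hKfin L hLfin τK τL g hg ε hε
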